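/- For any league outcome with n ≥ 2 teams and any team A, if P(A) ≤ 3n−6 then (n−1)·P(A) − P̄(A) ≤ 3(n−1)(n−2) − 3. -/

import Mathlib

open Finset

inductive MatchResult : Type
  | homeWin : MatchResult
  | draw : MatchResult
  | awayWin : MatchResult
  deriving DecidableEq

instance instFintypeMatchResult : Fintype MatchResult :=
  ⟨{.homeWin, .draw, .awayWin}, fun x => by cases x <;> simp⟩

/-- A league outcome: a result for each ordered pair of distinct teams
(the first component is the home team). -/
abbrev LeagueOutcome (n : ℕ) : Type :=
  {p : Fin n × Fin n // p.1 ≠ p.2} → MatchResult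

/-- Points earned by the home team. -/
def homePts : MatchResult → ℕ
  | .homeWin => 3
  | .draw => 1
  | .awayWin => 0

/-- Points earned by the away team. -/
def awayPts : MatchResult → ℕ
  | .homeWin => 0
  | .draw => 1
  | .awayWin => 3

/-- Total points of team `i`: sum over all matches of the points `i` earns in them. -/
def totalPoints {n : ℕ} (r : LeagueOutcome n) (i : Fin n) : ℕ :=
  ∑ m : {p : Fin n × Fin n // p.1 ≠ p.2},
    ((if m.val.1 = i then homePts (r m) else 0) +
     (if m.val.2 = i then awayPts (r m) else 0))

/-- Total points the other teams earn in their matches against team `i`. -/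
def oppPoints {n : ℕ} (r : LeagueOutcome n) (i : Fin n) : ℕ :=
  ∑ m : {p : Fin n × Fin n // p.1 ≠ p.2},
    ((if m.val.1 = i then awayPts (r m) else 0) +
     (if m.val.2 = i then homePts (r m) else 0))

/-- Number of matches that team `i` wins. -/
def wins {n : ℕ} (r : LeagueOutcome n) (i : Fin n) : ℕ :=
  (Finset.univ.filter (fun m : {p : Fin n × Fin n // p.1 ≠ p.2} =>
    (m.val.1 = i ∧ r m = .homeWin) ∨ (m.val.2 = i ∧ r m = .awayWin))).card

/-- Number of matches that team `i` draws. -/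
def draws {n : ℕ} (r : LeagueOutcome n) (i : Fin n) : ℕ :=
  (Finset.univ.filter (fun m : {p : Fin n × Fin n // p.1 ≠ p.2} =>
    (m.val.1 = i ∨ m.val.2 = i) ∧ r m = .draw)).card

/-- Number of matches that team `i` loses. -/
def losses {n : ℕ} (r : LeagueOutcome n) (i : Fin n) : ℕ :=
  (Finset.univ.filter (fun m : {p : Fin n × Fin n // p.1 ≠ p.2} =>
    (m.val.1 = i ∧ r m = .awayWin) ∨ (m.val.2 = i ∧ r m = .homeWin))).card

/-! Each of the `2(n-1)` matches of `A` hands out at least two points in total, so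
`P(A) + P̄(A) ≥ 4(n-1)`. Hence `(n-1)·P(A) - P̄(A) ≤ n·P(A) - 4(n-1) ≤ n(3n-6) - 4(n-1)`,
which is `3(n-1)(n-2) - 3 - (n-1)`. -/

lemma two_le_homePts_add_awayPts (x : MatchResult) : 2 ≤ homePts x + awayPts x := by
  cases x <;> decide

lemma card_filter_ne_fin {n : ℕ} (A : Fin n) : #{j | j ≠ A} = n - 1 := by
  simp [Finset.filter_ne', Finset.card_erase_of_mem]

lemma card_home_matches {n : ℕ} (A : Fin n) :
    #{m : {p : Fin n × Fin n // p.1 ≠ p.2} | m.val.1 = A} = n - 1 := by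
  rw [← card_filter_ne_fin A]
  refine Finset.card_bij (fun m _ => m.val.2) ?_ ?_ ?_
  · rintro ⟨⟨i, j⟩, hij⟩ hm
    simp only [mem_filter, mem_univ, true_and] at hm ⊢
    exact hm ▸ hij.symm
  · rintro ⟨⟨i, j⟩, _⟩ hm ⟨⟨i', j'⟩, _⟩ hm' rfl
    simp only [mem_filter, mem_univ, true_and] at hm hm'
    subst hm hm'
    rfl
  · intro j hj
    simp only [mem_filter, mem_univ, true_and] at hj
    exact ⟨⟨(A, j), Ne.symm hj⟩, by simp, rfl⟩

lemma card_away_matches {n : ℕ} (A : Fin n) :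
    #{m : {p : Fin n × Fin n // p.1 ≠ p.2} | m.val.2 = A} = n - 1 := by
  rw [← card_filter_ne_fin A]
  refine Finset.card_bij (fun m _ => m.val.1) ?_ ?_ ?_
  · rintro ⟨⟨i, j⟩, hij⟩ hm
    simp only [mem_filter, mem_univ, true_and] at hm ⊢
    exact hm ▸ hij
  · rintro ⟨⟨i, j⟩, _⟩ hm ⟨⟨i', j'⟩, _⟩ hm' rfl
    simp only [mem_filter, mem_univ, true_and] at hm hm'
    subst hm hm'
    rfl
  · intro i hi
    simp only [mem_filter, mem_univ, true_and] at hi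
    exact ⟨⟨(i, A), hi⟩, by simp, rfl⟩

lemma four_mul_pred_le_totalPoints_add_oppPoints {n : ℕ} (r : LeagueOutcome n) (A : Fin n) :
    4 * (n - 1) ≤ totalPoints r A + oppPoints r A := by
  calc 4 * (n - 1)
      = ∑ m : {p : Fin n × Fin n // p.1 ≠ p.2},
          ((if m.val.1 = A then 2 else 0) + (if m.val.2 = A then 2 else 0)) := by
        rw [sum_add_distrib, ← sum_filter, ← sum_filter, sum_const, sum_const,
          card_home_matches, card_away_matches]
        ring
    _ ≤ totalPoints r A + oppPoints r A := by
        rw [totalPoints, oppPoints, ← sum_add_distrib]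
        refine sum_le_sum fun m _ => ?_
        have := two_le_homePts_add_awayPts (r m)
        split_ifs <;> omega

theorem second_constraint_low_points (n : ℕ) (hn : 2 ≤ n) (r : LeagueOutcome n) (A : Fin n)
    (h : totalPoints r A ≤ 3 * n - 6) :
    ((n : ℤ) - 1) * (totalPoints r A : ℤ) - (oppPoints r A : ℤ) ≤
      3 * ((n : ℤ) - 1) * ((n : ℤ) - 2) - 3 := by
  have hP : (totalPoints r A : ℤ) ≤ 3 * n - 6 := by omega
  have hsum : 4 * ((n : ℤ) - 1) ≤ totalPoints r A + oppPoints r A := by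
    have := four_mul_pred_le_totalPoints_add_oppPoints r A
    omega
  calc ((n : ℤ) - 1) * totalPoints r A - oppPoints r A
      ≤ n * totalPoints r A - 4 * (n - 1) := by linarith
    _ ≤ n * (3 * n - 6) - 4 * (n - 1) := by gcongr
    _ ≤ 3 * ((n : ℤ) - 1) * ((n : ℤ) - 2) - 3 := by nlinarith
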